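/- arXiv:math/0601160 — 3 statements merged into one kernel-verified Lean document; each statement's English description precedes it below -/
import Mathlib

section
/- For all α ≥ 2 and u > 0, the expression F₃(α,u) = 8α²(1+u)³(1+u²)² - 12α(1+u)(1+u²)² - 24αu(1+u)²(1+u²) + 8(1+u²)u + 4(1+2u)(1+u²) + 8(1+u)u² is nonnegative. -/
theorem F3_nonneg (α u : ℝ) (hα : 2 ≤ α) (hu : 0 < u) :
    0 ≤ 8 * α ^ 2 * (1 + u) ^ 3 * (1 + u ^ 2) ^ 2
      - 12 * α * (1 + u) * (1 + u ^ 2) ^ 2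
      - 24 * α * u * (1 + u) ^ 2 * (1 + u ^ 2)
      + 8 * (1 + u ^ 2) * u + 4 * (1 + 2 * u) * (1 + u ^ 2)
      + 8 * (1 + u) * u ^ 2 := by
  have hu' := hu.le
  have ha : 0 ≤ α - 2 := by linarith
  have hA : (0:ℝ) ≤ (1 + u) ^ 3 * (1 + u ^ 2) ^ 2 := by positivity
  have h1 : 0 ≤ (α - 2) * (20 + 60*u + 88*u^2 + 152*u^3 + 164*u^4 + 124*u^5 + 96*u^6 + 32*u^7) := by
    apply mul_nonneg ha; positivity
  have h2 : 0 ≤ (α - 2)^2 * ((1 + u) ^ 3 * (1 + u ^ 2) ^ 2) := mul_nonneg (sq_nonneg _) hA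
  nlinarith [pow_nonneg hu' 2, pow_nonneg hu' 3, pow_nonneg hu' 4, pow_nonneg hu' 5, pow_nonneg hu' 6, pow_nonneg hu' 7]
end

section
/- Define G(α,u) = 16α³(1+u)⁴(1+u²)² - 48α²(1+u)²(1+u²)² - 96α²(1+u)³u(1+u²) + 136α(1+u)u(1+u²) + 8α(1+u)(1+2u)(1+u²) + 64α(1+u)²u² + 12α(1+u²)² + 24α(1+u)²(1+3u²) - 104u² - 32u - 16 - 16u³(1+u)/(1+u²). Then the partial derivative ∂G/∂α is positive for all α ≥ 2 and u > 0. -/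
noncomputable def G (α u : ℝ) : ℝ :=
  16 * α ^ 3 * (1 + u) ^ 4 * (1 + u ^ 2) ^ 2 - 48 * α ^ 2 * (1 + u) ^ 2 * (1 + u ^ 2) ^ 2
    - 96 * α ^ 2 * (1 + u) ^ 3 * u * (1 + u ^ 2) + 136 * α * (1 + u) * u * (1 + u ^ 2)
    + 8 * α * (1 + u) * (1 + 2 * u) * (1 + u ^ 2) + 64 * α * (1 + u) ^ 2 * u ^ 2
    + 12 * α * (1 + u ^ 2) ^ 2 + 24 * α * (1 + u) ^ 2 * (1 + 3 * u ^ 2)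
    - 104 * u ^ 2 - 32 * u - 16 - 16 * u ^ 3 * (1 + u) / (1 + u ^ 2)

theorem dG_dalpha_pos (α u : ℝ) (hα : 2 ≤ α) (hu : 0 < u) :
    HasDerivAt (fun a : ℝ => G a u)
      (48 * α ^ 2 * (1 + u) ^ 4 * (1 + u ^ 2) ^ 2 - 96 * α * (1 + u) ^ 2 * (1 + u ^ 2) ^ 2
        - 192 * α * (1 + u) ^ 3 * u * (1 + u ^ 2) + 136 * (1 + u) * u * (1 + u ^ 2)
        + 8 * (1 + u) * (1 + 2 * u) * (1 + u ^ 2) + 64 * (1 + u) ^ 2 * u ^ 2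
        + 12 * (1 + u ^ 2) ^ 2 + 24 * (1 + u) ^ 2 * (1 + 3 * u ^ 2)) α
    ∧ 0 < 48 * α ^ 2 * (1 + u) ^ 4 * (1 + u ^ 2) ^ 2 - 96 * α * (1 + u) ^ 2 * (1 + u ^ 2) ^ 2
        - 192 * α * (1 + u) ^ 3 * u * (1 + u ^ 2) + 136 * (1 + u) * u * (1 + u ^ 2)
        + 8 * (1 + u) * (1 + 2 * u) * (1 + u ^ 2) + 64 * (1 + u) ^ 2 * u ^ 2
        + 12 * (1 + u ^ 2) ^ 2 + 24 * (1 + u) ^ 2 * (1 + 3 * u ^ 2) := by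
  constructor
  · have h1 := (hasDerivAt_pow 3 α).const_mul (16 * (1 + u) ^ 4 * (1 + u ^ 2) ^ 2)
    have h2 := (hasDerivAt_pow 2 α).const_mul
      (-48 * (1 + u) ^ 2 * (1 + u ^ 2) ^ 2 - 96 * (1 + u) ^ 3 * u * (1 + u ^ 2))
    have h3 := ((hasDerivAt_id α).const_mul
      (136 * (1 + u) * u * (1 + u ^ 2) + 8 * (1 + u) * (1 + 2 * u) * (1 + u ^ 2)
        + 64 * (1 + u) ^ 2 * u ^ 2 + 12 * (1 + u ^ 2) ^ 2
        + 24 * (1 + u) ^ 2 * (1 + 3 * u ^ 2))).add_const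
      (-104 * u ^ 2 - 32 * u - 16 - 16 * u ^ 3 * (1 + u) / (1 + u ^ 2))
    have h := (h1.add h2).add h3
    have hfun : (fun a : ℝ => G a u) = (fun x : ℝ =>
        16 * (1 + u) ^ 4 * (1 + u ^ 2) ^ 2 * x ^ 3 +
          (-48 * (1 + u) ^ 2 * (1 + u ^ 2) ^ 2 - 96 * (1 + u) ^ 3 * u * (1 + u ^ 2)) * x ^ 2 +
        ((136 * (1 + u) * u * (1 + u ^ 2) + 8 * (1 + u) * (1 + 2 * u) * (1 + u ^ 2)
            + 64 * (1 + u) ^ 2 * u ^ 2 + 12 * (1 + u ^ 2) ^ 2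
            + 24 * (1 + u) ^ 2 * (1 + 3 * u ^ 2)) * id x +
          (-104 * u ^ 2 - 32 * u - 16 - 16 * u ^ 3 * (1 + u) / (1 + u ^ 2)))) := by
      funext x
      simp only [G, id]
      ring
    rw [hfun]
    refine HasDerivAt.congr_deriv h ?_
    push_cast
    ring
  · obtain ⟨b, hb, rfl⟩ : ∃ b, 0 ≤ b ∧ α = b + 2 := ⟨α - 2, by linarith, by ring⟩
    have hP : (0:ℝ) < 44 + 208 * u + 152 * u ^ 2 + 432 * u ^ 3 + 876 * u ^ 4 + 768 * u ^ 5 + 960 * u ^ 6 + 768 * u ^ 7 + 192 * u ^ 8 + 96 * b + 384 * b * u + 672 * b * u ^ 2 + 1152 * b * u ^ 3 + 1632 * b * u ^ 4 + 1536 * b * u ^ 5 + 1248 * b * u ^ 6 + 768 * b * u ^ 7 + 192 * b * u ^ 8 + 48 * b ^ 2 + 192 * b ^ 2 * u + 384 * b ^ 2 * u ^ 2 + 576 * b ^ 2 * u ^ 3 + 672 * b ^ 2 * u ^ 4 + 576 * b ^ 2 * u ^ 5 + 384 * b ^ 2 * u ^ 6 + 192 * b ^ 2 * u ^ 7 + 48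 * b ^ 2 * u ^ 8 := by
      positivity
    nlinarith [hP]
end

section
/- For u ∈ (0,1), G(2,u) := 2⁷u⁸ + 2⁹u⁷ + (5·2⁶ + 2⁷)u⁶ + 280u⁴ + 96u³ - 120u² + 128u + 8 - 16u³(1+u)/(1+u²) satisfies G(2,u) ≥ 8. -/
theorem G2_ge_eight (u : ℝ) (hu : u ∈ Set.Ioo (0:ℝ) 1) :
    8 ≤ 2 ^ 7 * u ^ 8 + 2 ^ 9 * u ^ 7 + (5 * 2 ^ 6 + 2 ^ 7) * u ^ 6 + 280 * u ^ 4
      + 96 * u ^ 3 - 120 * u ^ 2 + 128 * u + 8 - 16 * u ^ 3 * (1 + u) / (1 + u ^ 2) := by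
  obtain ⟨h0, h1⟩ := hu
  have hnum : 0 ≤ 16 * u ^ 3 * (1 + u) := by positivity
  have hd : (1:ℝ) ≤ 1 + u ^ 2 := by nlinarith
  have hle : 16 * u ^ 3 * (1 + u) / (1 + u ^ 2) ≤ 16 * u ^ 3 * (1 + u) :=
    div_le_self hnum hd
  nlinarith [sq_nonneg u, sq_nonneg (u-1), mul_pos h0 h0, pow_pos h0 3,
    mul_nonneg (mul_nonneg h0.le h0.le) h0.le, sq_nonneg (u*u), pow_pos h0 7,
    mul_nonneg (pow_pos h0 1).le (sq_nonneg (u - 3/4))]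
end
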